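/- For natural numbers M ≥ 1, n, and q with 0 ≤ q ≤ M-1, one has (Mn+q)! = M^{Mn} · q! · ∏_{β=0}^{M-1} ((q+β+1)/M)_n, as an identity of rational numbers. -/

import Mathlib

/-!
Writing `(Mn+q)! = q! · (q+1)_{Mn}`, the identity is Gauss's multiplication formula
`(x)_{Mn} = M^{Mn} ∏_{β<M} ((x+β)/M)_n` for the Pochhammer symbol at `x = q + 1`: each factor
`x + Mj + β` (`j < n`, `β < M`) of the left side is `M · ((x+β)/M + j)`.
-/

open Finset Polynomial

theorem ascPochhammer_eval_add {S : Type*} [CommSemiring S] (a b : ℕ) (x : S) :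
    (ascPochhammer S (a + b)).eval x =
      (ascPochhammer S a).eval x * (ascPochhammer S b).eval (x + a) := by
  rw [← ascPochhammer_mul, eval_mul, eval_comp, eval_add, eval_X, eval_natCast]

theorem ascPochhammer_eval_eq_prod_range {S : Type*} [CommSemiring S] (m : ℕ) (x : S) :
    (ascPochhammer S m).eval x = ∏ β ∈ range m, (x + β) := by
  induction m with
  | zero => simp
  | succ m ih => rw [ascPochhammer_succ_eval, ih, prod_range_succ]

theorem ascPochhammer_eval_mul {K : Type*} [Field K] {M : ℕ} (hM : (M : K) ≠ 0) (n : ℕ) (x : K) :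
    (ascPochhammer K (M * n)).eval x =
      (M : K) ^ (M * n) * ∏ β ∈ range M, (ascPochhammer K n).eval ((x + β) / M) := by
  induction n with
  | zero => simp
  | succ n ih =>
    have hfactor : ∀ β ∈ range M, (M : K) * ((x + β) / M + n) = x + ↑(M * n) + β := by
      intro β _
      push_cast
      field_simp
      ring
    calc (ascPochhammer K (M * (n + 1))).eval x
        = (ascPochhammer K (M * n)).eval x * ∏ β ∈ range M, (x + ↑(M * n) + β) := by
          rw [Nat.mul_succ, ascPochhammer_eval_add, ascPochhammer_eval_eq_prod_range M]
      _ = (M : K) ^ (M * n) * (∏ β ∈ range M, (ascPochhammer K n).eval ((x + β) / M)) *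
            ∏ β ∈ range M, ((M : K) * ((x + β) / M + n)) := by
          rw [ih, prod_congr rfl hfactor]
      _ = (M : K) ^ (M * (n + 1)) *
            ∏ β ∈ range M, (ascPochhammer K (n + 1)).eval ((x + β) / M) := by
          simp only [ascPochhammer_succ_eval, prod_mul_distrib, prod_const, card_range,
            Nat.mul_succ, pow_add]
          ring

theorem Nat.cast_factorial_add_eq_mul_ascPochhammer_eval {S : Type*} [CommSemiring S] (a b : ℕ) :
    ((a + b).factorial : S) = a.factorial * (ascPochhammer S b).eval ((a : S) + 1) := by
  rw [← Nat.factorial_mul_ascFactorial, ← Nat.cast_succ, ascPochhammer_nat_eq_natCast_ascFactorial,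
    Nat.cast_mul]

theorem factorial_M_n_plus_q_general (M n q : ℕ) :
    ((M * n + q).factorial : ℚ) =
      (M : ℚ) ^ (M * n) * (q.factorial : ℚ) *
        ∏ β ∈ Finset.range M,
          (ascPochhammer ℚ n).eval (((q : ℚ) + (β : ℚ) + 1) / (M : ℚ)) := by
  rcases Nat.eq_zero_or_pos M with rfl | hM
  · simp
  have hshift : ∀ β : ℕ, (q : ℚ) + 1 + β = q + β + 1 := fun β => add_right_comm _ _ _
  rw [add_comm, Nat.cast_factorial_add_eq_mul_ascPochhammer_eval,
    ascPochhammer_eval_mul (Nat.cast_ne_zero.mpr hM.ne'), mul_left_comm, mul_assoc]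
  simp only [hshift]

theorem factorial_M_n_plus_q (M n q : ℕ) (hM : 1 ≤ M) (hq : q ≤ M - 1) :
    ((M * n + q).factorial : ℚ) =
      (M : ℚ) ^ (M * n) * (q.factorial : ℚ) *
        ∏ β ∈ Finset.range M,
          (ascPochhammer ℚ n).eval (((q : ℚ) + (β : ℚ) + 1) / (M : ℚ)) :=
  factorial_M_n_plus_q_general M n q
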